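/- arXiv:1010.6131 — 3 statements merged into one kernel-verified Lean document; each statement's English description precedes it below -/
import Mathlib

section
/- For every integer n ≥ 4, the rainbow connection number of the cycle C_n on n vertices equals ⌈n/2⌉. -/
/-!
Colour the edge `{w, w + 1}` of `C_n` by `w mod ⌈n/2⌉`. Then every arc of at most `n / 2`
consecutive edges is rainbow, and any two vertices are joined by such an arc.

For the lower bound, follow a walk by its winding number, the number of its steps `w → w + 1`
minus the number of its steps `w → w - 1`. It is congruent mod `n` to the displacement of the
endpoints, and its absolute value is at most the length of the walk. So a walk shorter than both
arcs between its endpoints cannot exist, and a walk of length at most `d` that moves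
`u ↦ u + d` with `2d < n` is the clockwise arc. For `n = 2K` the antipodal vertices `0, K` thus
need `K` colours. For `n = 2K + 1` and only `K` colours, every `K` consecutive edges must carry
all `K` colours, so the colouring is `K`-periodic, and since `2K ≡ -1 (mod n)` it is constant,
although two consecutive edges must get different colours.
-/

open SimpleGraph

/-- The rainbow connection number of a graph `G`: the least `k` such that the edges of `G`
can be coloured with colours `0, …, k-1` so that any two distinct vertices are joined by a
path whose edges receive pairwise distinct colours. -/
noncomputable def rc {V : Type*} (G : SimpleGraph V) : ℕ :=
  sInf {k : ℕ | ∃ c : Sym2 V → ℕ, (∀ e ∈ G.edgeSet, c e < k) ∧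
    ∀ u v : V, u ≠ v → ∃ p : G.Walk u v, p.IsPath ∧ (p.edges.map c).Nodup}

theorem List.eq_of_nodup_cons_of_nodup_concat {α : Type*} [DecidableEq α] {s : Finset α}
    {a b : α} {l : List α} (ha : (a :: l).Nodup) (hb : (l ++ [b]).Nodup)
    (has : a ∈ s) (hbs : ∀ x ∈ l ++ [b], x ∈ s) (hcard : s.card = l.length + 1) : a = b := by
  have hs : (l ++ [b]).toFinset = s := by
    refine Finset.eq_of_subset_of_card_le (fun x hx => hbs x (List.mem_toFinset.mp hx)) ?_
    rw [List.toFinset_card_of_nodup hb, hcard, List.length_append, List.length_singleton]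
  have hal : a ∉ l := (List.nodup_cons.mp ha).1
  rw [← hs, List.mem_toFinset, List.mem_append, List.mem_singleton] at has
  exact has.resolve_left hal

theorem Nat.mod_ne_mod_add_mod {n : ℕ} (a t : ℕ) (ha : a < n) (ht : 0 < t)
    (htn : 2 * (t + 1) ≤ n) :
    a % ((n + 1) / 2) ≠ (a + t) % n % ((n + 1) / 2) := by
  have hmod : ∀ x < n, x % ((n + 1) / 2) = if x < (n + 1) / 2 then x else x - (n + 1) / 2 := by
    intro x hx
    split_ifs with h
    · exact Nat.mod_eq_of_lt h
    · rw [Nat.mod_eq_sub_mod (by omega), Nat.mod_eq_of_lt (by omega)]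
  rcases lt_or_ge (a + t) n with h | h
  · rw [Nat.mod_eq_of_lt h, hmod a ha, hmod _ h]
    split_ifs <;> omega
  · rw [Nat.mod_eq_sub_mod h, Nat.mod_eq_of_lt (a := a + t - n) (by omega), hmod a ha,
      hmod _ (by omega)]
    split_ifs <;> omega

namespace SimpleGraph

def IsRainbowColoring {V : Type*} (G : SimpleGraph V) (k : ℕ) (c : Sym2 V → ℕ) : Prop :=
  (∀ e ∈ G.edgeSet, c e < k) ∧
    ∀ u v : V, u ≠ v → ∃ p : G.Walk u v, p.IsPath ∧ (p.edges.map c).Nodup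

theorem Walk.length_le_of_nodup_map {V : Type*} {G : SimpleGraph V} {c : Sym2 V → ℕ} {k : ℕ}
    (hc : ∀ e ∈ G.edgeSet, c e < k) {u v : V} (p : G.Walk u v) (hp : (p.edges.map c).Nodup) :
    p.length ≤ k := by
  have hsub : (p.edges.map c).toFinset ⊆ Finset.range k := by
    intro x hx
    obtain ⟨e, he, rfl⟩ := List.mem_map.mp (List.mem_toFinset.mp hx)
    exact Finset.mem_range.mpr (hc e (p.edges_subset_edgeSet he))
  simpa [List.toFinset_card_of_nodup hp] using Finset.card_le_card hsub

namespace cycleGraph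

open scoped Fin.NatCast Fin.IntCast Fin.CommRing

variable {n : ℕ} [NeZero n]

theorem adj_iff (hn : 2 ≤ n) {u v : Fin n} :
    (cycleGraph n).Adj u v ↔ v = u + 1 ∨ u = v + 1 := by
  have h1 : (1 : Fin n).val = 1 := by rw [Fin.val_one', Nat.mod_eq_of_lt hn]
  rw [cycleGraph_adj', ← h1, ← Fin.ext_iff, ← Fin.ext_iff, sub_eq_iff_eq_add,
    sub_eq_iff_eq_add, add_comm 1 u, add_comm 1 v, or_comm]

theorem adj_add_one (hn : 2 ≤ n) (u : Fin n) : (cycleGraph n).Adj u (u + 1) :=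
  (adj_iff hn).2 (Or.inl rfl)

def arcEdges (u : Fin n) (m : ℕ) : List (Sym2 (Fin n)) :=
  (List.range m).map fun i : ℕ => s(u + (i : Fin n), u + (i : Fin n) + 1)

def arc (hn : 2 ≤ n) : (m : ℕ) → (u : Fin n) → (cycleGraph n).Walk u (u + m)
  | 0, u => Walk.nil.copy rfl (by simp)
  | m + 1, u => (Walk.cons (adj_add_one hn u) (arc hn m (u + 1))).copy rfl (by push_cast; ring)

theorem edges_arc (hn : 2 ≤ n) (m : ℕ) (u : Fin n) : (arc hn m u).edges = arcEdges u m := by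
  induction m generalizing u with
  | zero => simp [arc, arcEdges]
  | succ m ih =>
    rw [arc, Walk.edges_copy, Walk.edges_cons, ih, arcEdges, arcEdges, List.range_succ_eq_map]
    simp only [List.map_cons, List.map_map, Function.comp_def]
    push_cast
    ring_nf

theorem support_arc (hn : 2 ≤ n) (m : ℕ) (u : Fin n) :
    (arc hn m u).support = (List.range (m + 1)).map fun i : ℕ => u + (i : Fin n) := by
  induction m generalizing u with
  | zero => simp [arc]
  | succ m ih =>
    rw [arc, Walk.support_copy, Walk.support_cons, ih, List.range_succ_eq_map (n := m + 1)]
    simp only [List.map_cons, List.map_map, Function.comp_def]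
    push_cast
    ring_nf

theorem isPath_arc (hn : 2 ≤ n) {m : ℕ} (hm : m < n) (u : Fin n) : (arc hn m u).IsPath := by
  rw [Walk.isPath_def, support_arc]
  refine List.nodup_range.map_on fun i hi j hj hij => ?_
  rw [List.mem_range] at hi hj
  have := congrArg Fin.val (add_left_cancel hij)
  rwa [Fin.val_cast_of_lt (by omega), Fin.val_cast_of_lt (by omega)] at this

def winding : {u v : Fin n} → (cycleGraph n).Walk u v → ℤ
  | _, _, .nil => 0
  | u, _, .cons (v := w) _ p => (if w = u + 1 then 1 else -1) + winding p

theorem abs_winding_le {u v : Fin n} (p : (cycleGraph n).Walk u v) : |winding p| ≤ p.length := by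
  induction p with
  | nil => simp [winding]
  | @cons u w v h p ih =>
    have hstep : |(if w = u + 1 then 1 else -1 : ℤ)| ≤ 1 := by split <;> simp
    rw [winding, Walk.length_cons]
    push_cast
    linarith [abs_add_le (if w = u + 1 then 1 else -1 : ℤ) (winding p)]

theorem intCast_winding (hn : 2 ≤ n) {u v : Fin n} (p : (cycleGraph n).Walk u v) :
    ((winding p : ℤ) : Fin n) = v - u := by
  induction p with
  | nil => simp [winding]
  | @cons u w v h p ih =>
    rw [winding]
    push_cast
    rw [ih]
    split_ifs with hw
    · rw [hw]; ring
    · rw [((adj_iff hn).1 h).resolve_left hw]; ring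

theorem winding_eq_of_length_lt (hn : 2 ≤ n) {u v : Fin n} (p : (cycleGraph n).Walk u v)
    (hp : p.length + (v - u).val < n) : winding p = (v - u).val := by
  have hcast : (((winding p - (v - u).val : ℤ)) : Fin n) = 0 := by
    push_cast
    rw [intCast_winding hn, sub_self]
  obtain ⟨t, ht⟩ := (CharP.intCast_eq_zero_iff (Fin n) n _).mp hcast
  have hw := abs_le.mp (abs_winding_le p)
  rcases lt_trichotomy t 0 with h | rfl | h
  · nlinarith
  · linarith
  · nlinarith

theorem edges_eq_arcEdges_of_winding_eq_length {u v : Fin n}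
    (p : (cycleGraph n).Walk u v) (hp : winding p = p.length) :
    p.edges = arcEdges u p.length := by
  induction p with
  | nil => simp [arcEdges]
  | @cons u w v h p ih =>
    have hp' := le_of_abs_le (abs_winding_le p)
    rw [winding, Walk.length_cons] at hp
    by_cases hw : w = u + 1
    · subst hw
      rw [if_pos rfl] at hp
      rw [Walk.edges_cons, ih (by push_cast at hp; linarith), Walk.length_cons, arcEdges,
        arcEdges, List.range_succ_eq_map]
      simp only [List.map_cons, List.map_map, Function.comp_def]
      push_cast
      ring_nf
    · rw [if_neg hw] at hp
      push_cast at hp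
      linarith

def edgeColoring (f : Fin n → ℕ) : Sym2 (Fin n) → ℕ :=
  Sym2.lift ⟨fun a b => (if b = a + 1 then f a else 0) + (if a = b + 1 then f b else 0),
    fun _ _ => add_comm _ _⟩

theorem edgeColoring_mk (hn : 3 ≤ n) (f : Fin n → ℕ) (w : Fin n) :
    edgeColoring f s(w, w + 1) = f w := by
  have h2 : w ≠ w + 1 + 1 := by
    intro h
    have h0 : ((2 : ℕ) : Fin n) = 0 := by
      rw [add_assoc, left_eq_add] at h
      exact_mod_cast h
    have := congrArg Fin.val h0
    rw [Fin.val_cast_of_lt (by omega)] at this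
    simp at this
  simp [edgeColoring, h2]

theorem map_edgeColoring_arcEdges (hn : 3 ≤ n) (f : Fin n → ℕ) (u : Fin n) (m : ℕ) :
    (arcEdges u m).map (edgeColoring f) = (List.range m).map fun i : ℕ => f (u + i) := by
  simp only [arcEdges, List.map_map, Function.comp_def, edgeColoring_mk hn]

def periodicColoring (n : ℕ) [NeZero n] : Sym2 (Fin n) → ℕ :=
  edgeColoring fun w : Fin n => w.val % ((n + 1) / 2)

theorem nodup_map_periodicColoring_arcEdges (hn : 4 ≤ n) (u : Fin n) {m : ℕ} (hm : 2 * m ≤ n) :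
    ((arcEdges u m).map (periodicColoring n)).Nodup := by
  rw [periodicColoring, map_edgeColoring_arcEdges (by omega), List.Nodup, List.pairwise_map]
  refine List.pairwise_lt_range.imp_of_mem fun {i j} _ hj hij => ?_
  rw [List.mem_range] at hj
  have hval : (u + (j : Fin n)).val = ((u + (i : Fin n)).val + (j - i)) % n := by
    have hji : (j : Fin n) = i + ((j - i : ℕ) : Fin n) := by
      rw [Nat.cast_sub hij.le]; ring
    rw [hji, ← add_assoc, Fin.val_add _ (((j - i : ℕ) : Fin n)), Fin.val_cast_of_lt (by omega)]
  rw [hval]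
  exact Nat.mod_ne_mod_add_mod _ _ (Fin.isLt _) (by omega) (by omega)

theorem exists_isPath_nodup_periodicColoring (hn : 4 ≤ n) (u : Fin n) {d : ℕ}
    (hd : 2 * d ≤ n) :
    ∃ p : (cycleGraph n).Walk u (u + d), p.IsPath ∧ (p.edges.map (periodicColoring n)).Nodup :=
  ⟨arc (by omega) d u, isPath_arc _ (by omega) u,
    by rw [edges_arc]; exact nodup_map_periodicColoring_arcEdges hn u hd⟩

theorem isRainbowColoring_periodicColoring (hn : 4 ≤ n) :
    (cycleGraph n).IsRainbowColoring ((n + 1) / 2) (periodicColoring n) := by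
  refine ⟨fun e he => ?_, fun u v huv => ?_⟩
  · induction e using Sym2.ind with | _ a b => ?_
    have hlt : ∀ w : Fin n, periodicColoring n s(w, w + 1) < (n + 1) / 2 := fun w => by
      rw [periodicColoring, edgeColoring_mk (by omega)]
      exact Nat.mod_lt _ (by omega)
    rcases (adj_iff (by omega)).1 ((cycleGraph n).mem_edgeSet.mp he) with rfl | rfl
    · exact hlt a
    · rw [Sym2.eq_swap]; exact hlt b
  · set d := (v - u).val
    have hv : u + d = v := by simp [d]
    rcases le_or_gt (2 * d) n with hd | hd
    · obtain ⟨p, hp, hc⟩ := exists_isPath_nodup_periodicColoring hn u hd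
      exact ⟨p.copy rfl hv, by simpa, by simpa⟩
    · have hu : v + ((n - d : ℕ) : Fin n) = u := by
        rw [Nat.cast_sub (Fin.isLt _).le, Fin.natCast_self, zero_sub, Fin.cast_val_eq_self]
        ring
      obtain ⟨p, hp, hc⟩ := exists_isPath_nodup_periodicColoring hn v (d := n - d) (by omega)
      refine ⟨(p.copy rfl hu).reverse, by simpa [Walk.isPath_reverse_iff], ?_⟩
      simpa [List.map_reverse] using hc

theorem self_ne_add_natCast {d : ℕ} (hd : 0 < d) (hdn : d < n) (u : Fin n) : u ≠ u + d := by
  intro h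
  have := congrArg Fin.val (left_eq_add.mp h)
  rw [Fin.val_cast_of_lt hdn] at this
  simp only [Fin.val_zero] at this
  omega

theorem le_of_isRainbowColoring_of_even {K k : ℕ} (hK : 0 < K) {c : Sym2 (Fin (2 * K)) → ℕ}
    (hc : (cycleGraph (2 * K)).IsRainbowColoring k c) : K ≤ k := by
  have : NeZero (2 * K) := ⟨by omega⟩
  obtain ⟨p, -, hp⟩ := hc.2 0 (0 + K) (self_ne_add_natCast hK (by omega) 0)
  have hd : ((0 + K : Fin (2 * K)) - 0).val = K := by
    rw [add_sub_cancel_left, Fin.val_cast_of_lt (by omega)]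
  have hlen := p.length_le_of_nodup_map hc.1 hp
  have habs := le_of_abs_le (abs_winding_le p)
  by_contra! hk
  rw [winding_eq_of_length_lt (by omega) p (by omega), hd] at habs
  omega

theorem nodup_map_arcEdges_of_isRainbowColoring {K k : ℕ} (hK : 0 < K)
    {c : Sym2 (Fin (2 * K + 1)) → ℕ} (hc : (cycleGraph (2 * K + 1)).IsRainbowColoring k c)
    (hk : k ≤ K) (u : Fin (2 * K + 1)) : ((arcEdges u K).map c).Nodup := by
  obtain ⟨p, -, hp⟩ := hc.2 u (u + K) (self_ne_add_natCast hK (by omega) u)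
  have hd : ((u + K : Fin (2 * K + 1)) - u).val = K := by
    rw [add_sub_cancel_left, Fin.val_cast_of_lt (by omega)]
  have hlen := p.length_le_of_nodup_map hc.1 hp
  have hw : winding p = K := by rw [winding_eq_of_length_lt (by omega) p (by omega), hd]
  have hlen' : p.length = K := by linarith [le_of_abs_le (abs_winding_le p)]
  rwa [edges_eq_arcEdges_of_winding_eq_length p (by omega), hlen'] at hp

theorem eq_add_natCast_of_nodup_window {K : ℕ} {F : Fin n → ℕ} (hF : ∀ w, F w < K)
    (hwindow : ∀ u, ((List.range K).map fun i : ℕ => F (u + i)).Nodup) (u : Fin n) :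
    F u = F (u + K) := by
  obtain ⟨J, rfl⟩ : ∃ J, K = J + 1 := ⟨K - 1, by have := hF 0; omega⟩
  set l := (List.range J).map fun i : ℕ => F (u + 1 + i)
  have hl : ((List.range (J + 1)).map fun i : ℕ => F (u + i)) = F u :: l := by
    simp only [List.range_succ_eq_map, List.map_cons, List.map_map, Function.comp_def, l]
    push_cast
    simp only [add_zero, add_comm, add_left_comm]
  have hr : ((List.range (J + 1)).map fun i : ℕ => F (u + 1 + i)) =
      l ++ [F (u + (J + 1 : ℕ))] := by
    simp only [List.range_succ, List.map_append, List.map_cons, List.map_nil, l]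
    push_cast
    ring_nf
  have hrange : ∀ x ∈ l ++ [F (u + (J + 1 : ℕ))], x ∈ Finset.range (J + 1) := by
    intro x hx
    rw [← hr] at hx
    obtain ⟨i, -, rfl⟩ := List.mem_map.mp hx
    exact Finset.mem_range.mpr (hF _)
  exact List.eq_of_nodup_cons_of_nodup_concat (hl ▸ hwindow u) (hr ▸ hwindow (u + 1))
    (Finset.mem_range.mpr (hF u)) hrange (by simp [l])

theorem lt_of_isRainbowColoring_of_odd {K k : ℕ} (hK : 2 ≤ K) {c : Sym2 (Fin (2 * K + 1)) → ℕ}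
    (hc : (cycleGraph (2 * K + 1)).IsRainbowColoring k c) : K < k := by
  by_contra! hk
  set F : Fin (2 * K + 1) → ℕ := fun w => c s(w, w + 1)
  have hF (w : Fin (2 * K + 1)) : F w < K := (hc.1 _ (adj_add_one (by omega) w)).trans_le hk
  have hwindow (u : Fin (2 * K + 1)) : ((List.range K).map fun i : ℕ => F (u + i)).Nodup := by
    simpa [arcEdges, Function.comp_def] using
      nodup_map_arcEdges_of_isRainbowColoring (by omega) hc hk u
  have hperiod := eq_add_natCast_of_nodup_window hF hwindow
  have hzero : (1 : Fin (2 * K + 1)) + K + K = 0 := by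
    have h := Fin.natCast_self (2 * K + 1)
    push_cast at h ⊢
    linear_combination h
  have h01 : F (0 + (0 : ℕ)) = F (0 + (1 : ℕ)) := by
    rw [Nat.cast_zero, Nat.cast_one, zero_add, zero_add, ← hzero]
    exact ((hperiod 1).trans (hperiod _)).symm
  have := List.inj_on_of_nodup_map (hwindow 0) (List.mem_range.2 (by omega))
    (List.mem_range.2 (by omega)) h01
  omega

end cycleGraph

end SimpleGraph

/-- For every `n ≥ 4`, the rainbow connection number of the cycle on `n` vertices equals
`⌈n/2⌉` (which is `(n+1)/2` with natural-number division). -/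
theorem rc_cycleGraph (n : ℕ) (hn : 4 ≤ n) :
    rc (SimpleGraph.cycleGraph n) = (n + 1) / 2 := by
  have : NeZero n := ⟨by omega⟩
  have hup := cycleGraph.isRainbowColoring_periodicColoring hn
  refine le_antisymm (Nat.sInf_le ⟨_, hup⟩) (le_csInf ⟨_, _, hup⟩ ?_)
  rintro k ⟨c, hc⟩
  obtain ⟨K, rfl | rfl⟩ := Nat.even_or_odd' n
  · have := cycleGraph.le_of_isRainbowColoring_of_even (by omega) hc
    omega
  · have := cycleGraph.lt_of_isRainbowColoring_of_odd (by omega) hc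
    omega
end

section
/- Let H be a connected graph and let H' be obtained from H by adding four new vertices x_1, x_2, x_3, x_4, where each x_i is joined by edges f_{i1}, f_{i2}, f_{i3} to three distinct vertices of H (and there are no other new edges). Then rc(H') ≤ rc(H) + 2. -/
/-!
Colour `H` rainbow with `k = rc H` colours, and give each new vertex `xᵢ` colour `k` on the edge
to one chosen neighbour and colour `k + 1` on its other edges. A vertex of `H` reaches `xᵢ` by a
rainbow path of `H` to the chosen neighbour followed by the `k`-edge; `xᵢ` reaches `xⱼ` by its
`k`-edge, a rainbow path of `H`, and a `(k + 1)`-edge at `xⱼ`, which exists because `xⱼ` has two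
distinct neighbours.

This needs `H` to have some rainbow colouring with finitely many colours. When it has none,
`rc H = 0` (as `sInf ∅ = 0`), and then the new graph has none either: in a rainbow path between
vertices of `H` shortcut each passage `a i j – xᵢ – a i j'` by a fixed walk of `H`; giving the
finitely many edges of these fixed walks fresh colours yields a rainbow colouring of `H`.
-/

open SimpleGraph

open Sum

namespace SimpleGraph

variable {V W ι κ : Type*}

def IsRainbowColouring (G : SimpleGraph V) (c : Sym2 V → ℕ) (k : ℕ) : Prop :=
  (∀ e ∈ G.edgeSet, c e < k) ∧
    ∀ u v : V, u ≠ v → ∃ p : G.Walk u v, p.IsPath ∧ (p.edges.map c).Nodup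

theorem Walk.exists_isPath_nodup_map_edges {α : Type*} {G : SimpleGraph V} {u v : V}
    (p : G.Walk u v) {c : Sym2 V → α} (hc : Set.InjOn c {e | e ∈ p.edges}) :
    ∃ q : G.Walk u v, q.IsPath ∧ (q.edges.map c).Nodup := by
  classical
  exact ⟨p.bypass, p.bypass_isPath, p.bypass_isPath.isTrail.edges_nodup.map_on fun _ he _ he' h =>
    hc (p.edges_bypass_subset_edges he) (p.edges_bypass_subset_edges he') h⟩

theorem rc_eq_sInf (G : SimpleGraph V) : rc G = sInf {k | ∃ c, G.IsRainbowColouring c k} := rfl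

section Rainbow

variable {G : SimpleGraph V} {c : Sym2 V → ℕ} {k : ℕ}

theorem IsRainbowColouring.of_walks (hlt : ∀ e ∈ G.edgeSet, c e < k)
    (hwalk : ∀ u v : V, u ≠ v → ∃ p : G.Walk u v, (p.edges.map c).Nodup) :
    G.IsRainbowColouring c k :=
  ⟨hlt, fun u v huv =>
    let ⟨p, hp⟩ := hwalk u v huv
    p.exists_isPath_nodup_map_edges fun _ he _ he' h => List.inj_on_of_nodup_map hp he he' h⟩

theorem IsRainbowColouring.exists_walk (hc : G.IsRainbowColouring c k) (u v : V) :
    ∃ p : G.Walk u v, (p.edges.map c).Nodup := by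
  obtain rfl | huv := eq_or_ne u v
  · exact ⟨.nil, List.nodup_nil⟩
  · obtain ⟨p, -, hp⟩ := hc.2 u v huv
    exact ⟨p, hp⟩

theorem IsRainbowColouring.lt_of_mem_edges (hc : G.IsRainbowColouring c k) {u v : V}
    (p : G.Walk u v) {e : Sym2 V} (he : e ∈ p.edges) : c e < k :=
  hc.1 e (p.edges_subset_edgeSet he)

end Rainbow

theorem rc_le_rc_add {G : SimpleGraph V} {H : SimpleGraph W} {m : ℕ}
    (hext : ∀ c k, H.IsRainbowColouring c k → ∃ c', G.IsRainbowColouring c' (k + m))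
    (hres : ∀ c k, G.IsRainbowColouring c k → ∃ c' k', H.IsRainbowColouring c' k') :
    rc G ≤ rc H + m := by
  by_cases hH : ∃ c k, H.IsRainbowColouring c k
  · obtain ⟨c, hc⟩ : ∃ c, H.IsRainbowColouring c (rc H) :=
      Nat.sInf_mem (s := {k | ∃ c, H.IsRainbowColouring c k})
        (let ⟨c, k, hc⟩ := hH; ⟨k, c, hc⟩)
    obtain ⟨c', hc'⟩ := hext c _ hc
    exact Nat.sInf_le ⟨c', hc'⟩
  · have hG : {k | ∃ c, G.IsRainbowColouring c k} = ∅ :=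
      Set.eq_empty_of_forall_notMem fun k ⟨c, hc⟩ => hH (hres c k hc)
    simp only [rc_eq_sInf, hG, Nat.sInf_empty, zero_le]

def attach (H : SimpleGraph V) (a : ι → κ → V) : SimpleGraph (V ⊕ ι) :=
  fromRel fun u v =>
    (∃ p q, u = inl p ∧ v = inl q ∧ H.Adj p q) ∨ (∃ i j, u = inl (a i j) ∧ v = inr i)

variable {H : SimpleGraph V} {a : ι → κ → V}

@[simp] theorem attach_adj_inl_inl {p q : V} :
    (H.attach a).Adj (inl p) (inl q) ↔ H.Adj p q := by
  simpa [attach, H.adj_comm q p] using H.ne_of_adj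

@[simp] theorem attach_adj_inl_inr {p : V} {i : ι} :
    (H.attach a).Adj (inl p) (inr i) ↔ ∃ j, a i j = p := by
  simp [attach, fromRel_adj, eq_comm]

@[simp] theorem attach_adj_inr_inl {p : V} {i : ι} :
    (H.attach a).Adj (inr i) (inl p) ↔ ∃ j, a i j = p := by
  rw [adj_comm, attach_adj_inl_inr]

@[simp] theorem not_attach_adj_inr_inr {i i' : ι} : ¬ (H.attach a).Adj (inr i) (inr i') := by
  simp [attach, fromRel_adj]

abbrev attachHom (H : SimpleGraph V) (a : ι → κ → V) : H →g H.attach a :=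
  ⟨inl, attach_adj_inl_inl.2⟩

section Extension

variable [DecidableEq V]

def attachColouring (a : ι → κ → V) (j₀ : κ) (c : Sym2 V → ℕ) (k : ℕ) :
    Sym2 (V ⊕ ι) → ℕ :=
  Sym2.lift ⟨fun x y => match x, y with
    | inl p, inl q => c s(p, q)
    | inl p, inr i | inr i, inl p => if p = a i j₀ then k else k + 1
    | inr _, inr _ => 0, by rintro (p | i) (q | i') <;> simp [Sym2.eq_swap]⟩

variable {j₀ : κ} {c : Sym2 V → ℕ} {k : ℕ}

@[simp] theorem attachColouring_map_inl (e : Sym2 V) :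
    attachColouring a j₀ c k (e.map inl) = c e := by
  induction e using Sym2.ind with | _ p q => rfl

@[simp] theorem attachColouring_inl_inl (p q : V) :
    attachColouring a j₀ c k s(inl p, inl q) = c s(p, q) := rfl

@[simp] theorem attachColouring_inl_inr (p : V) (i : ι) :
    attachColouring a j₀ c k s(inl p, inr i) = if p = a i j₀ then k else k + 1 := rfl

@[simp] theorem attachColouring_inr_inl (p : V) (i : ι) :
    attachColouring a j₀ c k s(inr i, inl p) = if p = a i j₀ then k else k + 1 := rfl

theorem attachColouring_map_edges {u v : V} (p : H.Walk u v) :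
    ((p.map (H.attachHom a)).edges.map (attachColouring a j₀ c k)) = p.edges.map c := by
  simp [Walk.edges_map, Function.comp_def, attachHom]

theorem attachColouring_lt (hc : H.IsRainbowColouring c k) {e : Sym2 (V ⊕ ι)}
    (he : e ∈ (H.attach a).edgeSet) : attachColouring a j₀ c k e < k + 2 := by
  induction e using Sym2.ind with | _ x y =>
  rcases x with p | i <;> rcases y with q | i' <;> simp only [mem_edgeSet, attach_adj_inl_inl,
    attach_adj_inl_inr, attach_adj_inr_inl, not_attach_adj_inr_inr] at he
  · exact (hc.1 s(p, q) he).trans (by simp)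
  all_goals simp only [attachColouring_inl_inr, attachColouring_inr_inl]; split <;> omega

theorem IsRainbowColouring.exists_attach_walk_inl_inr (hc : H.IsRainbowColouring c k)
    (u : V) (i : ι) : ∃ p : (H.attach a).Walk (inl u) (inr i),
      (p.edges.map (attachColouring a j₀ c k)).Nodup := by
  obtain ⟨P, hP⟩ := hc.exists_walk u (a i j₀)
  have hadj : (H.attach a).Adj (H.attachHom a (a i j₀)) (inr i) :=
    attach_adj_inl_inr.2 ⟨j₀, rfl⟩
  have hW : (((P.map (H.attachHom a)).concat hadj).edges.map
      (attachColouring a j₀ c k)).Nodup := by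
    simp only [Walk.edges_concat, List.concat_eq_append, List.map_append,
      attachColouring_map_edges]
    simpa [List.nodup_append, hP] using fun e he => (hc.lt_of_mem_edges P he).ne
  exact ⟨_, hW⟩

theorem IsRainbowColouring.exists_attach_walk_inr_inr (hc : H.IsRainbowColouring c k)
    {j₁ : κ} (ha : ∀ i, a i j₀ ≠ a i j₁) (i i' : ι) :
    ∃ p : (H.attach a).Walk (inr i) (inr i'),
      (p.edges.map (attachColouring a j₀ c k)).Nodup := by
  obtain ⟨P, hP⟩ := hc.exists_walk (a i j₀) (a i' j₁)
  have hadj₀ : (H.attach a).Adj (inr i) (H.attachHom a (a i j₀)) :=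
    attach_adj_inr_inl.2 ⟨j₀, rfl⟩
  have hadj₁ : (H.attach a).Adj (H.attachHom a (a i' j₁)) (inr i') :=
    attach_adj_inl_inr.2 ⟨j₁, rfl⟩
  have hW : ((Walk.cons hadj₀ ((P.map (H.attachHom a)).concat hadj₁)).edges.map
      (attachColouring a j₀ c k)).Nodup := by
    simp only [Walk.edges_cons, Walk.edges_concat, List.concat_eq_append, List.map_cons,
      List.map_append, attachColouring_map_edges]
    have hlt (e : Sym2 V) (he : e ∈ P.edges) : c e < k := hc.lt_of_mem_edges P he
    simp [List.nodup_append, hP, (ha i').symm]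
    exact ⟨fun e he => (hlt e he).ne, fun e he => by have := hlt e he; omega⟩
  exact ⟨_, hW⟩

theorem IsRainbowColouring.attach (hc : H.IsRainbowColouring c k) {j₁ : κ}
    (ha : ∀ i, a i j₀ ≠ a i j₁) :
    (H.attach a).IsRainbowColouring (attachColouring a j₀ c k) (k + 2) := by
  refine .of_walks (fun e he => attachColouring_lt hc he) ?_
  rintro (u | i) (v | i') -
  · obtain ⟨P, hP⟩ := hc.exists_walk u v
    exact ⟨P.map (H.attachHom a), by rwa [attachColouring_map_edges]⟩
  · exact hc.exists_attach_walk_inl_inr u i'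
  · obtain ⟨p, hp⟩ := hc.exists_attach_walk_inl_inr v i
    exact ⟨p.reverse, by simpa [Walk.edges_reverse] using hp⟩
  · exact hc.exists_attach_walk_inr_inr ha i i'

end Extension

section Recolour

variable {α : Type*} [DecidableEq α]

noncomputable def recolour (F : Finset α) (c : α → ℕ) (k : ℕ) (e : α) : ℕ :=
  if h : e ∈ F then k + F.equivFin ⟨e, h⟩ else c e

variable {F : Finset α} {c : α → ℕ} {k : ℕ}

theorem recolour_lt {e : α} (he : e ∉ F → c e < k) : recolour F c k e < k + F.card := by
  unfold recolour
  split_ifs with h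
  · simp
  · exact (he h).trans_le (by simp)

theorem injOn_recolour {T : Set α} (hc : Set.InjOn c T) (hT : ∀ e ∈ T, c e < k) :
    Set.InjOn (recolour F c k) (F ∪ T) := by
  rintro e he e' he' h
  unfold recolour at h
  split_ifs at h with hF hF' hF'
  · simpa using F.equivFin.injective (Fin.ext (Nat.add_left_cancel h))
  · have := hT e' (he'.resolve_left hF'); omega
  · have := hT e (he.resolve_left hF); omega
  · exact hc (he.resolve_left hF) (he'.resolve_left hF') h

end Recolour

section Restriction

def anchors (a : ι → κ → V) : V ⊕ ι → Set V :=
  Sum.elim (fun u => {u}) (fun i => Set.range (a i))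

variable {S : Set (Sym2 V)}

theorem exists_anchor_reachable_of_attach_adj
    (hS : ∀ i j j', (H.deleteEdges Sᶜ).Reachable (a i j) (a i j')) {x z : V ⊕ ι}
    (hxz : (H.attach a).Adj x z) (hedge : ∀ e, e.map inl = s(x, z) → e ∈ S) :
    ∀ u ∈ anchors a x, ∃ w ∈ anchors a z, (H.deleteEdges Sᶜ).Reachable u w := by
  rcases x with p | i <;> rcases z with q | i' <;>
    simp only [anchors, elim_inl, elim_inr, Set.mem_singleton_iff, Set.mem_range,
      forall_eq, exists_eq_left, forall_exists_index, forall_apply_eq_imp_iff,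
      attach_adj_inl_inl, attach_adj_inl_inr, attach_adj_inr_inl] at hxz ⊢
  · exact (deleteEdges_adj.2 ⟨hxz, not_not.2 (hedge s(p, q) rfl)⟩).reachable
  · obtain ⟨j, rfl⟩ := hxz
    exact ⟨a i' j, ⟨j, rfl⟩, .refl _⟩
  · obtain ⟨j', rfl⟩ := hxz
    exact fun j => hS i j j'
  · exact (not_attach_adj_inr_inr hxz).elim

theorem reachable_of_anchors_of_attach_walk
    (hS : ∀ i j j', (H.deleteEdges Sᶜ).Reachable (a i j) (a i j')) {x y : V ⊕ ι}
    (P : (H.attach a).Walk x y) (hP : ∀ e, e.map inl ∈ P.edges → e ∈ S) :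
    ∀ u ∈ anchors a x, ∀ v ∈ anchors a y, (H.deleteEdges Sᶜ).Reachable u v := by
  induction P with
  | @nil x =>
    rcases x with w | i
    · rintro u rfl v rfl
      rfl
    · rintro _ ⟨j, rfl⟩ _ ⟨j', rfl⟩
      exact hS i j j'
  | cons hxz P ih =>
    intro u hu v hv
    obtain ⟨w, hw, huw⟩ := exists_anchor_reachable_of_attach_adj hS hxz
      (fun e he => hP e (by simp [he])) u hu
    exact huw.trans (ih (fun e he => hP e (by simp [he])) w hw v hv)

theorem IsRainbowColouring.of_attach [Finite ι] [Finite κ] (hH : H.Connected)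
    {c : Sym2 (V ⊕ ι) → ℕ} {k : ℕ} (hc : (H.attach a).IsRainbowColouring c k) :
    ∃ c' k', H.IsRainbowColouring c' k' := by
  classical
  let Q (i : ι) (j j' : κ) : H.Walk (a i j) (a i j') := (hH.preconnected _ _).some
  let F : Set (Sym2 V) := ⋃ i, ⋃ j, ⋃ j', {e | e ∈ (Q i j j').edges}
  have hF : F.Finite := Set.finite_iUnion fun i => Set.finite_iUnion fun j =>
    Set.finite_iUnion fun j' => (Q i j j').edges.finite_toSet
  refine ⟨recolour hF.toFinset (fun e : Sym2 V => c (e.map inl)) k, k + hF.toFinset.card,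
    fun e he => recolour_lt fun _ => hc.1 _ ((H.attachHom a).map_mem_edgeSet he),
    fun u v huv => ?_⟩
  obtain ⟨P, -, hP⟩ := hc.2 (inl u) (inl v) (by simpa using huv)
  let S : Set (Sym2 V) := F ∪ {e | e.map inl ∈ P.edges}
  have hS (i : ι) (j j' : κ) : (H.deleteEdges Sᶜ).Reachable (a i j) (a i j') :=
    ⟨(Q i j j').toDeleteEdges Sᶜ fun e he =>
      not_not.2 (Or.inl (Set.mem_iUnion₂.2 ⟨i, j, Set.mem_iUnion.2 ⟨j', he⟩⟩))⟩
  obtain ⟨W⟩ := reachable_of_anchors_of_attach_walk hS P (fun e he => Or.inr he) u rfl v rfl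
  have hinj : Set.InjOn (fun e : Sym2 V => c (e.map inl)) {e | e.map inl ∈ P.edges} :=
    fun e he e' he' h => Sym2.map.injective inl_injective (List.inj_on_of_nodup_map hP he he' h)
  refine (W.mapLe (deleteEdges_le _)).exists_isPath_nodup_map_edges
    ((injOn_recolour hinj fun e he => hc.1 _ (P.edges_subset_edgeSet he)).mono fun e he => ?_)
  have he' : e ∈ H.edgeSet \ Sᶜ := by
    rw [← edgeSet_deleteEdges]
    exact W.edges_subset_edgeSet (by simpa [Walk.edges_mapLe_eq_edges] using he)
  rw [hF.coe_toFinset]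
  exact not_not.1 he'.2

end Restriction

end SimpleGraph

/-- Adding four new vertices `x₁, x₂, x₃, x₄` to a connected graph `H`, each joined by
three edges to three distinct vertices of `H` (and no other new edges), increases the
rainbow connection number by at most 2.  The new vertex `xᵢ` is `Sum.inr i`, and its three
neighbours in `H` are `a i 0, a i 1, a i 2`. -/
theorem rc_add_four_vertices {V : Type*} (H : SimpleGraph V) (hH : H.Connected)
    (a : Fin 4 → Fin 3 → V) (ha : ∀ i, Function.Injective (a i)) :
    rc (SimpleGraph.fromRel (fun u v : V ⊕ Fin 4 =>
        (∃ p q, u = Sum.inl p ∧ v = Sum.inl q ∧ H.Adj p q) ∨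
        (∃ i j, u = Sum.inl (a i j) ∧ v = Sum.inr i))) ≤ rc H + 2 := by
  classical
  have hne (i : Fin 4) : a i 0 ≠ a i 1 := fun h => absurd (ha i h) (by decide)
  exact rc_le_rc_add (G := H.attach a) (fun c k hc => ⟨_, hc.attach hne⟩)
    fun c k hc => hc.of_attach hH
end

section
/- Let G be a connected simple graph on n vertices and let H be a connected subgraph of G on n − 1 vertices, so that exactly one vertex x of G lies outside H and x has at least one neighbour in H. Then rc(G) ≤ rc(H) + 1. -/
open SimpleGraph

/-!
Take a rainbow colouring of `H` with `rc H` colours, keep it on the edges of `H` and give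
every other edge of `G` the new colour `rc H`. Two vertices of `H` are joined by their rainbow
path in `H`. The outside vertex `x` reaches a vertex `u` of `H` through a neighbour `y ∈ H`
followed by the rainbow `y`–`u` path of `H`; the edge `xy` is the only one with the new colour.
-/

namespace SimpleGraph

variable {V : Type*} {G : SimpleGraph V}

def IsRainbowConnecting (G : SimpleGraph V) (c : Sym2 V → ℕ) : Prop :=
  ∀ u v : V, u ≠ v → ∃ p : G.Walk u v, p.IsPath ∧ (p.edges.map c).Nodup

lemma IsRainbowConnecting.exists_path {c : Sym2 V → ℕ} (hc : G.IsRainbowConnecting c)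
    (u v : V) : ∃ p : G.Walk u v, p.IsPath ∧ (p.edges.map c).Nodup := by
  obtain rfl | huv := eq_or_ne u v
  · exact ⟨.nil, .nil, List.nodup_nil⟩
  · exact hc u v huv

lemma rc_le_of_isRainbowConnecting {c : Sym2 V → ℕ} {k : ℕ} (hlt : ∀ e ∈ G.edgeSet, c e < k)
    (hc : G.IsRainbowConnecting c) : rc G ≤ k :=
  Nat.sInf_le ⟨c, hlt, hc⟩

lemma Connected.exists_isRainbowConnecting [Finite V] (hG : G.Connected) :
    ∃ c : Sym2 V → ℕ, (∀ e ∈ G.edgeSet, c e < rc G) ∧ G.IsRainbowConnecting c := by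
  obtain ⟨n, ⟨f⟩⟩ := Finite.exists_equiv_fin (Sym2 V)
  have hinj : Function.Injective fun e => (f e : ℕ) := Fin.val_injective.comp f.injective
  refine Nat.sInf_mem (s := {k | ∃ c : Sym2 V → ℕ, (∀ e ∈ G.edgeSet, c e < k) ∧
    G.IsRainbowConnecting c}) ⟨n, fun e => f e, fun e _ => (f e).isLt, fun u v _ => ?_⟩
  obtain ⟨p, hp⟩ := (hG.preconnected u v).exists_isPath
  exact ⟨p, hp, hp.edges_nodup.map hinj⟩

namespace Subgraph

variable (H : G.Subgraph) (c : Sym2 H.verts → ℕ) (k : ℕ)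

/-- The colouring of `G` that agrees with `c` on the edges of `H` and is `k` elsewhere. -/
noncomputable def extendColoring (e : Sym2 V) : ℕ :=
  haveI := Classical.propDecidable (e ∈ H.edgeSet)
  if e ∈ H.edgeSet then Function.extend (Sym2.map (↑)) c (fun _ => k) e else k

variable {H c k}

lemma extendColoring_map_coe {e : Sym2 H.verts} (he : e ∈ H.coe.edgeSet) :
    H.extendColoring c k (Sym2.map (↑) e) = c e := by
  rw [edgeSet_coe, Set.mem_preimage] at he
  rw [extendColoring, if_pos he, (Sym2.map.injective Subtype.val_injective).extend_apply]

lemma extendColoring_of_notMem {e : Sym2 V} (he : e ∉ H.edgeSet) :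
    H.extendColoring c k e = k := by
  simp only [extendColoring, if_neg he]

lemma extendColoring_le (hlt : ∀ e ∈ H.coe.edgeSet, c e < k) (e : Sym2 V) :
    H.extendColoring c k e ≤ k := by
  by_cases he : e ∈ H.edgeSet
  · obtain ⟨e, he', rfl⟩ := H.image_coe_edgeSet_coe.symm ▸ he
    rw [extendColoring_map_coe he']
    exact (hlt e he').le
  · exact (extendColoring_of_notMem he).le

lemma edges_map_hom_map_extendColoring {a b : H.verts} (p : H.coe.Walk a b) :
    (p.map H.hom).edges.map (H.extendColoring c k) = p.edges.map c := by
  rw [Walk.edges_map, List.map_map]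
  exact List.map_congr_left fun e he => extendColoring_map_coe (p.edges_subset_edgeSet he)

variable {x y u v : V}

lemma exists_path_extendColoring_of_mem (hc : H.coe.IsRainbowConnecting c) (hu : u ∈ H.verts)
    (hv : v ∈ H.verts) :
    ∃ p : G.Walk u v, p.IsPath ∧ (p.edges.map (H.extendColoring c k)).Nodup := by
  obtain ⟨p, hp, hpc⟩ := hc.exists_path ⟨u, hu⟩ ⟨v, hv⟩
  exact ⟨p.map H.hom, hp.map hom_injective, edges_map_hom_map_extendColoring p ▸ hpc⟩

lemma exists_path_extendColoring_of_adj (hlt : ∀ e ∈ H.coe.edgeSet, c e < k)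
    (hc : H.coe.IsRainbowConnecting c) (hx : x ∉ H.verts) (hxy : G.Adj x y)
    (hy : y ∈ H.verts) (hu : u ∈ H.verts) :
    ∃ p : G.Walk x u, p.IsPath ∧ (p.edges.map (H.extendColoring c k)).Nodup := by
  obtain ⟨p, hp, hpc⟩ := hc.exists_path ⟨y, hy⟩ ⟨u, hu⟩
  have hx_support : x ∉ (p.map H.hom).support := fun h => by
    rw [Walk.support_map] at h
    obtain ⟨a, -, rfl⟩ := List.mem_map.1 h
    exact hx a.2
  have hxy_col : H.extendColoring c k s(x, y) = k :=
    extendColoring_of_notMem fun h => hx (H.edge_vert (Subgraph.mem_edgeSet.1 h))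
  have hk : k ∉ p.edges.map c := fun h => by
    obtain ⟨e, he, hek⟩ := List.mem_map.1 h
    exact (hlt e (p.edges_subset_edgeSet he)).ne hek
  refine ⟨.cons hxy (p.map H.hom), (Walk.cons_isPath_iff _ _).2 ⟨hp.map hom_injective, hx_support⟩,
    ?_⟩
  show ((s(x, y) :: (p.map H.hom).edges).map _).Nodup
  rw [List.map_cons, hxy_col, edges_map_hom_map_extendColoring]
  exact List.nodup_cons.2 ⟨hk, hpc⟩

end Subgraph

theorem IsRainbowConnecting.extendColoring {H : G.Subgraph} {c : Sym2 H.verts → ℕ} {k : ℕ}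
    {x y : V} (hverts : H.verts = {x}ᶜ) (hxy : G.Adj x y) (hlt : ∀ e ∈ H.coe.edgeSet, c e < k)
    (hc : H.coe.IsRainbowConnecting c) : G.IsRainbowConnecting (H.extendColoring c k) := by
  have hmem : ∀ {v}, v ≠ x → v ∈ H.verts := fun hv => hverts ▸ hv
  have hx : x ∉ H.verts := hverts ▸ fun h => h rfl
  have from_x : ∀ {v}, v ≠ x → ∃ p : G.Walk x v, p.IsPath ∧
      (p.edges.map (H.extendColoring c k)).Nodup := fun hv =>
    Subgraph.exists_path_extendColoring_of_adj hlt hc hx hxy (hmem hxy.ne') (hmem hv)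
  intro u v huv
  by_cases hu : u = x
  · exact hu ▸ from_x (hu ▸ huv.symm)
  by_cases hv : v = x
  · obtain ⟨p, hp, hpc⟩ := from_x hu
    refine hv ▸ ⟨p.reverse, hp.reverse, ?_⟩
    rwa [Walk.edges_reverse, List.map_reverse, List.nodup_reverse]
  exact Subgraph.exists_path_extendColoring_of_mem hc (hmem hu) (hmem hv)

end SimpleGraph

theorem rc_le_rc_subgraph_add_one_general {V : Type*} [Fintype V] (G : SimpleGraph V)
    (H : G.Subgraph) (hHconn : H.Connected) (x : V)
    (hverts : H.verts = {x}ᶜ) (hnbr : ∃ y ∈ H.verts, G.Adj x y) :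
    rc G ≤ rc H.coe + 1 := by
  obtain ⟨y, -, hxy⟩ := hnbr
  obtain ⟨c, hlt, hc⟩ := hHconn.coe.exists_isRainbowConnecting
  refine rc_le_of_isRainbowConnecting (fun e _ => ?_) (hc.extendColoring hverts hxy hlt)
  exact Nat.lt_succ_of_le (Subgraph.extendColoring_le hlt e)

/-- If `G` is connected on `n` vertices and `H` is a connected subgraph on `n - 1`
vertices, so that exactly one vertex `x` of `G` lies outside `H`, and `x` has at least one
neighbour in `H`, then `rc(G) ≤ rc(H) + 1`. -/
theorem rc_le_rc_subgraph_add_one {V : Type*} [Fintype V] (G : SimpleGraph V)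
    (hG : G.Connected) (H : G.Subgraph) (hHconn : H.Connected) (x : V)
    (hverts : H.verts = {x}ᶜ) (hnbr : ∃ y ∈ H.verts, G.Adj x y) :
    rc G ≤ rc H.coe + 1 :=
  rc_le_rc_subgraph_add_one_general G H hHconn x hverts hnbr
end
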